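/- For every nonnegative integer \(\alpha\), nonnegative integers k and m, real j (in particular nonnegative integer j), one has \(\sum_{i=0}^{\infty}\frac{(-1)^i}{\Gamma(i+j)}\binom{k+\alpha+3}{i}(-i)_k\,(m+\alpha+3)_i = (\alpha+4)_k\,(m+\alpha+3)_k\,\frac{(j-m-\alpha-3)_{\alpha+3}}{\Gamma(k+j+\alpha+3)}\), where the sum is finite since \(\binom{k+\alpha+3}{i}=0\) for \(i>k+\alpha+3\). -/

import Mathlib

open Finset

/-- Rising factorial (Pochhammer symbol) `(x)_k = x(x+1)⋯(x+k-1)`. -/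
noncomputable def poch (x : ℝ) (k : ℕ) : ℝ := (ascPochhammer ℝ k).eval x

/-- Generalized binomial coefficient `C(y, m) = (y-m+1)_m / m!` for real `y`. -/
noncomputable def gbinom (y : ℝ) (m : ℕ) : ℝ := poch (y - m + 1) m / m.factorial

/-- Generalized binomial coefficient with integer lower index, zero for negative index. -/
noncomputable def gbinomZ (y : ℝ) (m : ℤ) : ℝ := if 0 ≤ m then gbinom y m.toNat else 0

/-- Generalized Laguerre polynomial `L_n^{(a)}(x)`, defined for all real `a`. -/
noncomputable def Lag (n : ℕ) (a : ℝ) (x : ℝ) : ℝ :=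
  ∑ k ∈ range (n + 1),
    (-1 : ℝ) ^ k * poch (a + k + 1) (n - k) / (n - k).factorial * x ^ k / k.factorial

/-! Only the indices `i = k + t`, `0 ≤ t ≤ n := α + 3`, contribute, as `(-i)_k = 0` for `i < k`.
For them `(-i)_k = (-1)^k (k+t)!/t!` and `(M)_(k+t) = (M)_k (M+k)_t`, which turns the sum into
`(α+4)_k (M)_k` times the alternating binomial sum `∑ₜ (-1)^t C(n,t) (M')_t / Γ(c+t)`.
Since `1/Γ(z) = z/Γ(z+1)`, the forward difference of `t ↦ (M')_t / Γ(c+t)` is `M' - c` times the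
same function with `c + 1`; hence its `n`-th difference at `0`, which is `(-1)^n` times the
alternating sum, equals `(-1)^n (c-M')_n / Γ(c+n)`. -/

open scoped fwdDiff

-- Also at the poles `s = 0, -1, …`, where Mathlib's `Γ` takes the value `0` on both sides.
theorem Real.inv_Gamma_eq_mul_inv_Gamma_add_one (s : ℝ) :
    (Real.Gamma s)⁻¹ = s * (Real.Gamma (s + 1))⁻¹ := by
  rcases eq_or_ne s 0 with rfl | hs
  · simp
  · rw [Real.Gamma_add_one hs, mul_inv, mul_inv_cancel_left₀ hs]

lemma poch_zero (x : ℝ) : poch x 0 = 1 := by simp [poch]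

lemma poch_succ (x : ℝ) (n : ℕ) : poch x (n + 1) = poch x n * (x + n) :=
  ascPochhammer_succ_eval n x

lemma poch_add (x : ℝ) (a b : ℕ) : poch x (a + b) = poch x a * poch (x + a) b := by
  simp [poch, ← ascPochhammer_mul, Polynomial.eval_comp]

lemma poch_natCast (n k : ℕ) : poch n k = n.ascFactorial k := by
  rw [poch, ← ascPochhammer_eval_cast, ascPochhammer_nat_eq_ascFactorial]

lemma poch_neg_natCast (n k : ℕ) : poch (-n) k = (-1) ^ k * n.descFactorial k := by
  rw [poch, ascPochhammer_eval_neg_eq_descPochhammer, descPochhammer_eval_eq_descFactorial]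

lemma poch_neg_natCast_of_lt {n k : ℕ} (h : n < k) : poch (-n) k = 0 :=
  ascPochhammer_eval_neg_coe_nat_of_lt h

noncomputable def pochGammaRatio (M c : ℝ) (t : ℕ) : ℝ := poch M t / Real.Gamma (c + t)

lemma fwdDiff_pochGammaRatio (M c : ℝ) :
    Δ_[1] (pochGammaRatio M c) = (M - c) • pochGammaRatio M (c + 1) := by
  ext t
  simp only [fwdDiff, pochGammaRatio, Pi.smul_apply, smul_eq_mul, poch_succ, div_eq_mul_inv,
    Real.inv_Gamma_eq_mul_inv_Gamma_add_one (c + t), Nat.cast_add, Nat.cast_one]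
  ring_nf

lemma fwdDiff_iter_pochGammaRatio (M c : ℝ) (n : ℕ) :
    (Δ_[1])^[n] (pochGammaRatio M c) = ((-1) ^ n * poch (c - M) n) • pochGammaRatio M (c + n) := by
  induction n with
  | zero => simp [poch]
  | succ n ih =>
    rw [Function.iterate_succ_apply', ih, fwdDiff_const_smul, fwdDiff_pochGammaRatio, smul_smul,
      poch_succ, Nat.cast_succ, add_assoc]
    congr 1
    ring

theorem alternating_sum_choose_poch_div_Gamma (n : ℕ) (M c : ℝ) :
    ∑ t ∈ range (n + 1), (-1) ^ t * n.choose t * poch M t / Real.Gamma (c + t)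
      = poch (c - M) n / Real.Gamma (c + n) := by
  have h := congr_fun (fwdDiff_iter_pochGammaRatio M c n) 0
  simp only [fwdDiff_iter_eq_sum_shift, pochGammaRatio, Pi.smul_apply, smul_eq_mul, zsmul_eq_mul,
    Int.cast_mul, Int.cast_pow, Int.cast_neg, Int.cast_one, Int.cast_natCast,
    zero_add, mul_one, Nat.cast_zero, add_zero, poch_zero] at h
  calc _ = (-1) ^ n * ∑ t ∈ range (n + 1),
        (-1) ^ (n - t) * n.choose t * (poch M t / Real.Gamma (c + t)) := by
        rw [mul_sum]
        refine sum_congr rfl fun t _ => ?_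
        have hsign : (-1 : ℝ) ^ t = (-1) ^ n * (-1) ^ (n - t) := by
          rw [← pow_add, show n + (n - t) = t + 2 * (n - t) by grind, pow_add, pow_mul]
          simp
        rw [hsign]
        ring
    _ = poch (c - M) n / Real.Gamma (c + n) := by
        rw [h, ← mul_assoc, ← mul_assoc, ← pow_add, ← two_mul, pow_mul]
        simp [div_eq_mul_inv]

theorem Nat.choose_mul_descFactorial (n k t : ℕ) :
    (k + n).choose (k + t) * (k + t).descFactorial k = (n + 1).ascFactorial k * n.choose t := by
  rw [Nat.descFactorial_eq_factorial_mul_choose, mul_left_comm,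
    Nat.choose_mul (Nat.le_add_right k t), Nat.add_sub_cancel_left, Nat.add_sub_cancel_left,
    ← mul_assoc, ← Nat.descFactorial_eq_factorial_mul_choose, add_comm k n,
    Nat.add_descFactorial_eq_ascFactorial]

lemma sum_choose_poch_neg_mul_poch (n k : ℕ) (M c : ℝ) :
    ∑ i ∈ range (k + n + 1), (-1) ^ i / Real.Gamma (i + c) * (k + n).choose i
        * poch (-i) k * poch M i
      = poch (n + 1) k * poch M k * poch (c - M) n / Real.Gamma (k + c + n) := by
  have term (t : ℕ) : (-1) ^ (k + t) / Real.Gamma ((k + t : ℕ) + c) * (k + n).choose (k + t)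
        * poch (-(k + t : ℕ)) k * poch M (k + t)
      = poch (n + 1) k * poch M k
        * ((-1) ^ t * n.choose t * poch (M + k) t / Real.Gamma (k + c + t)) := by
    have hcoeff : ((k + n).choose (k + t) : ℝ) * (k + t).descFactorial k
        = poch (n + 1) k * n.choose t := by
      rw [show (n : ℝ) + 1 = (n + 1 : ℕ) by push_cast; ring, poch_natCast]
      exact_mod_cast Nat.choose_mul_descFactorial n k t
    have hsign : ((-1 : ℝ) ^ k) ^ 2 = 1 := by rw [← pow_mul, mul_comm, pow_mul]; simp
    rw [poch_neg_natCast, poch_add, pow_add,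
      show ((k + t : ℕ) : ℝ) + c = k + c + t by push_cast; ring]
    linear_combination ((-1) ^ t * (Real.Gamma (k + c + t))⁻¹ * poch M k * poch (M + k) t
        * (k + n).choose (k + t) * (k + t).descFactorial k) * hsign
      + ((-1) ^ t * (Real.Gamma (k + c + t))⁻¹ * poch M k * poch (M + k) t) * hcoeff
  rw [add_assoc, sum_range_add,
    sum_eq_zero fun i hi => by rw [poch_neg_natCast_of_lt (mem_range.1 hi)]; ring, zero_add,
    sum_congr rfl fun t _ => term t, ← mul_sum, alternating_sum_choose_poch_div_Gamma,
    show k + c - (M + k) = c - M by ring]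
  ring

theorem S_sum_formula (α k m j : ℕ) :
    ∑ i ∈ range (k + α + 4),
        (-1 : ℝ) ^ i / Real.Gamma ((i : ℝ) + j) * ((k + α + 3).choose i : ℝ)
          * poch (-(i : ℝ)) k * poch ((m : ℝ) + α + 3) i
      = poch ((α : ℝ) + 4) k * poch ((m : ℝ) + α + 3) k
          * poch ((j : ℝ) - m - α - 3) (α + 3) / Real.Gamma ((k : ℝ) + j + α + 3) := by
  rw [show (α : ℝ) + 4 = (α + 3 : ℕ) + 1 by push_cast; ring,
    show (j : ℝ) - m - α - 3 = j - (m + α + 3) by ring,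
    show (k : ℝ) + j + α + 3 = k + j + (α + 3 : ℕ) by push_cast; ring]
  exact sum_choose_poch_neg_mul_poch (α + 3) k _ _
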